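/- arXiv:1710.04628 — 2 statements merged into one kernel-verified Lean document; each statement's English description precedes it below -/
import Mathlib

section
/- Let A be a residuated modal algebra (a Boolean algebra with additive ◇F, ◇B where ◇F ⊣ □B and ◇B ⊣ □F), and let f : A × A → A be the map f(a, b) = a ∨ ◇F b. Suppose O_f : A → Finset (A × A) satisfies: for all a, b, c ∈ A, f(a, b) ≤ c iff there exists (a', b') ∈ O_f(c) with a ≤ a' and b ≤ b'. Then every O_f-closed subset C of A (i.e., c ∈ C implies a', b' ∈ C for all (a', b') ∈ O_f(c)) that contains an element c must also contain □B c. -/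
/-! Since `◇F ⊣ □B`, the greatest `b` with `⊥ ⊔ ◇F b ≤ c` is `□B c`. Applying the O-condition to
`(⊥, □B c)` yields a pair in `O_f c` whose second coordinate is at least `□B c`, and applying it
back to that pair itself shows the coordinate is also at most `□B c`. -/

theorem GaloisConnection.exists_mem_snd_eq {α β : Type*} [SemilatticeSup α] [OrderBot α]
    [PartialOrder β] {d : β → α} {g : α → β} (hdg : GaloisConnection d g)
    (O : α → Finset (α × β)) (hO : ∀ a b c, a ⊔ d b ≤ c ↔ ∃ p ∈ O c, a ≤ p.1 ∧ b ≤ p.2)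
    (c : α) : ∃ p ∈ O c, p.2 = g c := by
  obtain ⟨p, hp, -, hgp⟩ := (hO ⊥ (g c) c).mp (by simpa using hdg.l_u_le c)
  have hpc : p.1 ⊔ d p.2 ≤ c := (hO p.1 p.2 c).mpr ⟨p, hp, le_rfl, le_rfl⟩
  exact ⟨p, hp, le_antisymm (hdg.le_u (le_sup_right.trans hpc)) hgp⟩

theorem Oclosed_contains_boxB_general {A : Type*} [BooleanAlgebra A]
    (diaF diaB : A → A)
    (hresF : ∀ a b : A, diaF a ≤ b ↔ a ≤ (diaB bᶜ)ᶜ)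
    (Of : A → Finset (A × A))
    (hOf : ∀ a b c : A, a ⊔ diaF b ≤ c ↔ ∃ p ∈ Of c, a ≤ p.1 ∧ b ≤ p.2)
    (C : Set A)
    (hC : ∀ c ∈ C, ∀ p ∈ Of c, p.1 ∈ C ∧ p.2 ∈ C) :
    ∀ c ∈ C, (diaB cᶜ)ᶜ ∈ C := by
  intro c hc
  have hdg : GaloisConnection diaF (fun b => (diaB bᶜ)ᶜ) := hresF
  obtain ⟨p, hp, hp2⟩ := hdg.exists_mem_snd_eq Of hOf c
  exact hp2 ▸ (hC c hc p hp).2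

/-- in a residuated modal algebra, if `O_f` witnesses O-adjointness of
`f(a,b) = a ⊔ ◇F b`, then every `O_f`-closed set containing `c` also contains `□B c`. -/
theorem Oclosed_contains_boxB {A : Type*} [BooleanAlgebra A]
    (diaF diaB : A → A)
    (hFbot : diaF ⊥ = ⊥) (hBbot : diaB ⊥ = ⊥)
    (hFadd : ∀ x y, diaF (x ⊔ y) = diaF x ⊔ diaF y)
    (hBadd : ∀ x y, diaB (x ⊔ y) = diaB x ⊔ diaB y)
    (hresF : ∀ a b : A, diaF a ≤ b ↔ a ≤ (diaB bᶜ)ᶜ)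
    (hresB : ∀ a b : A, diaB a ≤ b ↔ a ≤ (diaF bᶜ)ᶜ)
    (Of : A → Finset (A × A))
    (hOf : ∀ a b c : A, a ⊔ diaF b ≤ c ↔ ∃ p ∈ Of c, a ≤ p.1 ∧ b ≤ p.2)
    (C : Set A)
    (hC : ∀ c ∈ C, ∀ p ∈ Of c, p.1 ∈ C ∧ p.2 ∈ C) :
    ∀ c ∈ C, (diaB cᶜ)ᶜ ∈ C :=
  Oclosed_contains_boxB_general diaF diaB hresF Of hOf C hC
end

section
/- Let Δ be a guardification of Γ (for each γ ∈ Γ there are guarded γ₁, γ₂ with ⊢_MLC γ(x,q) ↔ (x ∧ γ₁(x,q)) ∨ γ₂(x,q), and Δ = {γ₂ | γ ∈ Γ}). Then every MLC_Γ-algebra is an MLC_{Γ∪Δ}-algebra: if the map χ_A(−, b) has a least prefixpoint l in A for χ ∈ Γ, then l is also the least prefixpoint of (γ₂)_A(−, b) where γ₂ is the guardification of χ. -/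
theorem setOf_le_self_eq_of_eq_inf_sup {α : Type*} [Lattice α] {χ γ₁ γ₂ : α → α}
    (heq : ∀ a, χ a = (a ⊓ γ₁ a) ⊔ γ₂ a) : {a | χ a ≤ a} = {a | γ₂ a ≤ a} :=
  Set.ext fun a => by simp only [Set.mem_ofPred_eq, heq, sup_le_iff, inf_le_left, true_and]

theorem guardification_least_prefixpoint_general {A : Type*} [BooleanAlgebra A]
    (χ γ₁ γ₂ : A → A)
    (heq : ∀ a : A, χ a = (a ⊓ γ₁ a) ⊔ γ₂ a)
    (l : A) (hl : IsLeast {a : A | χ a ≤ a} l) :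
    IsLeast {a : A | γ₂ a ≤ a} l := by
  rwa [← setOf_le_self_eq_of_eq_inf_sup heq]

/-- algebraic content of guardification: in an algebra where
`χ(a) = (a ⊓ γ₁(a)) ⊔ γ₂(a)` holds, if `l` is the least prefixpoint of `χ`
then `l` is also the least prefixpoint of `γ₂`. -/
theorem guardification_least_prefixpoint {A : Type*} [BooleanAlgebra A]
    (χ γ₁ γ₂ : A → A) (hχ : Monotone χ) (h₁ : Monotone γ₁) (h₂ : Monotone γ₂)
    (heq : ∀ a : A, χ a = (a ⊓ γ₁ a) ⊔ γ₂ a)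
    (l : A) (hl : IsLeast {a : A | χ a ≤ a} l) :
    IsLeast {a : A | γ₂ a ≤ a} l :=
  guardification_least_prefixpoint_general χ γ₁ γ₂ heq l hl
end
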